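/- arXiv:2408.07248 — 2 statements merged into one kernel-verified Lean document; each statement's English description precedes it below -/
import Mathlib

section
/- Let δ > 0 and let ξ_1, ξ_2, ξ_3, ξ_4 ∈ [0,1] satisfy ξ_1 + ξ_2 = ξ_3 + ξ_4, ξ_1^3 + ξ_2^3 = ξ_3^3 + ξ_4^3 + O(δ) (i.e. |ξ_1^3 + ξ_2^3 - ξ_3^3 - ξ_4^3| ≤ δ), and max_i ξ_i ≥ δ^(1/3). Then |ξ_1·ξ_2 - ξ_3·ξ_4| ≤ δ / (3·max_i ξ_i) · 3, i.e. |ξ_1ξ_2 - ξ_3ξ_4| ≲ δ / max_i ξ_i. -/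
/-!
Since `ξ₁ + ξ₂ = ξ₃ + ξ₄ =: s`, the cubic sums differ by exactly `3 s (ξ₃ξ₄ - ξ₁ξ₂)`, so
`3 s |ξ₁ξ₂ - ξ₃ξ₄| ≤ δ`. As all `ξᵢ` are nonnegative, `s` dominates each of them, so one may
replace `s` by `maxᵢ ξᵢ ≥ δ^(1/3) > 0` and divide by it.
-/

section CubicSums

variable {R : Type*}

theorem cube_add_cube_sub_of_add_eq [CommRing R] {a b c d : R} (h : a + b = c + d) :
    a ^ 3 + b ^ 3 - c ^ 3 - d ^ 3 = 3 * (a + b) * (c * d - a * b) := by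
  linear_combination ((a + b) ^ 2 + (a + b) * (c + d) + (c + d) ^ 2 - 3 * c * d) * h

theorem max_max_le_add_of_add_eq [AddCommGroup R] [LinearOrder R] [IsOrderedAddMonoid R]
    {a b c d : R} (ha : 0 ≤ a) (hb : 0 ≤ b) (hc : 0 ≤ c) (hd : 0 ≤ d) (h : a + b = c + d) :
    max (max a b) (max c d) ≤ a + b :=
  max_le (max_le (le_add_of_nonneg_right hb) (le_add_of_nonneg_left ha))
    (h ▸ max_le (le_add_of_nonneg_right hd) (le_add_of_nonneg_left hc))

theorem abs_mul_sub_mul_mul_max_le [CommRing R] [LinearOrder R] [IsStrictOrderedRing R]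
    {a b c d : R} (ha : 0 ≤ a) (hb : 0 ≤ b) (hc : 0 ≤ c) (hd : 0 ≤ d) (h : a + b = c + d) :
    3 * (|a * b - c * d| * max (max a b) (max c d)) ≤ |a ^ 3 + b ^ 3 - c ^ 3 - d ^ 3| :=
  calc 3 * (|a * b - c * d| * max (max a b) (max c d))
      ≤ 3 * (|a * b - c * d| * (a + b)) := by
        gcongr; exact max_max_le_add_of_add_eq ha hb hc hd h
    _ = |a ^ 3 + b ^ 3 - c ^ 3 - d ^ 3| := by
        rw [cube_add_cube_sub_of_add_eq h, abs_mul,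
          abs_of_nonneg (by linarith : (0 : R) ≤ 3 * (a + b)), abs_sub_comm]
        ring

end CubicSums

/-- Key estimate in the cubic square function argument: dividing
`3ξ₁ξ₂(ξ₁+ξ₂) = 3ξ₃ξ₄(ξ₃+ξ₄) + O(δ)` by `3(ξ₁+ξ₂)`. -/
theorem stmt_4 (δ ξ₁ ξ₂ ξ₃ ξ₄ : ℝ) (hδ : 0 < δ)
    (h₁ : ξ₁ ∈ Set.Icc (0:ℝ) 1) (h₂ : ξ₂ ∈ Set.Icc (0:ℝ) 1)
    (h₃ : ξ₃ ∈ Set.Icc (0:ℝ) 1) (h₄ : ξ₄ ∈ Set.Icc (0:ℝ) 1)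
    (hsum : ξ₁ + ξ₂ = ξ₃ + ξ₄)
    (hcube : |ξ₁^3 + ξ₂^3 - ξ₃^3 - ξ₄^3| ≤ δ)
    (hmax : δ ^ ((1:ℝ)/3) ≤ max (max ξ₁ ξ₂) (max ξ₃ ξ₄)) :
    |ξ₁ * ξ₂ - ξ₃ * ξ₄| ≤ δ / (3 * max (max ξ₁ ξ₂) (max ξ₃ ξ₄)) * 3 := by
  have hM : 0 < max (max ξ₁ ξ₂) (max ξ₃ ξ₄) := (Real.rpow_pos_of_pos hδ _).trans_le hmax
  have hbound := abs_mul_sub_mul_mul_max_le h₁.1 h₂.1 h₃.1 h₄.1 hsum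
  rw [div_mul_eq_mul_div, le_div_iff₀ (by positivity)]
  linarith
end

section
/- Let h > 0, σ > 0, r > 1 with h ≪ σ², and let z, z' ∈ ℂ, ℓ, ℓ_1, C, C_1 ∈ ℂ with |ℓ|, |ℓ_1| ≤ A·r^{-1}σ, |C|, |C_1| ≤ A, and Δz = z' - z. Denote γ(z) = (z, z²) ∈ ℂ², γ'(z) = (1, 2z), n(z) = (-2·conj(z), 1). Suppose h·γ(z) + ℓ·γ'(z) + C·r^{-2}·n(z) = h·γ(z') + ℓ_1·γ'(z') + C_1·r^{-2}·n(z'). Then, with 1+4|z|² ≥ 1: (i) ℓ = ℓ_1 + h·Δz + O(r^{-2}·(1+|Δz|)) and (ii) (h·Δz/2 + ℓ_1)·Δz = O(r^{-2}·(1+|Δz|)), where the implicit constants depend only on A and an upper bound for |z|, |z'|. -/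
/-!
Comparing first coordinates gives `ℓ - ℓ₁ - h Δz = c₁ n' - c n` with `c = C / r²` and `n = -2 z̄`;
comparing second coordinates and subtracting `2z` times the first one collapses
`h (z'² - z²)` to `(h Δz + 2ℓ₁) Δz = c - c₁ + 2z (c₁ n' - c n)`. Both right-hand sides are
`O(r⁻²)` because `|c|, |c₁| ≤ A r⁻²` and `|n|, |n'| ≤ 2R`.
-/

section Parabola

variable {R : Type*} [CommRing R] {h z z' ℓ ℓ₁ c c₁ n n' : R}

theorem parabola_plank_sub_eq
    (heq : h • (z, z ^ 2) + ℓ • (1, 2 * z) + c • (n, 1)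
      = h • (z', z' ^ 2) + ℓ₁ • (1, 2 * z') + c₁ • (n', 1)) :
    ℓ - (ℓ₁ + h * (z' - z)) = c₁ * n' - c * n ∧
      (h * (z' - z) + 2 * ℓ₁) * (z' - z) = c - c₁ + 2 * z * (c₁ * n' - c * n) := by
  simp only [Prod.smul_mk, Prod.mk_add_mk, Prod.mk.injEq, smul_eq_mul] at heq
  obtain ⟨e₁, e₂⟩ := heq
  exact ⟨by linear_combination e₁, by linear_combination 2 * z * e₁ - e₂⟩

end Parabola

theorem norm_mul_sub_mul_le {R : Type*} [NonUnitalSeminormedRing R] {a b c d : R} {B N : ℝ}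
    (ha : ‖a‖ ≤ B) (hb : ‖b‖ ≤ N) (hc : ‖c‖ ≤ B) (hd : ‖d‖ ≤ N) :
    ‖a * b - c * d‖ ≤ 2 * (B * N) := by
  have hB : 0 ≤ B := (norm_nonneg a).trans ha
  calc ‖a * b - c * d‖ ≤ ‖a‖ * ‖b‖ + ‖c‖ * ‖d‖ :=
        (norm_sub_le _ _).trans (add_le_add (norm_mul_le a b) (norm_mul_le c d))
    _ ≤ B * N + B * N := by gcongr
    _ = 2 * (B * N) := by ring

theorem Complex.norm_div_ofReal_sq_le {C : ℂ} {A : ℝ} (hC : ‖C‖ ≤ A) (r : ℝ) :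
    ‖C / (r : ℂ) ^ 2‖ ≤ A * r⁻¹ ^ 2 := by
  rw [norm_div, norm_pow, Complex.norm_real, Real.norm_eq_abs, sq_abs, div_eq_mul_inv, inv_pow]
  exact mul_le_mul_of_nonneg_right hC (by positivity)

theorem Complex.norm_neg_two_mul_conj_le {z : ℂ} {R : ℝ} (hz : ‖z‖ ≤ R) :
    ‖-2 * (starRingEnd ℂ) z‖ ≤ 2 * R := by
  rw [norm_mul, norm_neg, Complex.norm_two, Complex.norm_conj]
  linarith

/-- Compatibility equations from matching two plank representations of a point
over the complex parabola `γ(z) = (z, z²)`, `γ'(z) = (1, 2z)`,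
`n(z) = (-2 conj z, 1)`. -/
theorem stmt_14 (A R : ℝ) (hA : 0 < A) (hR : 0 < R) :
    ∃ K : ℝ, 0 < K ∧
      ∀ (h σ r : ℝ) (z z' ℓ ℓ₁ C C₁ : ℂ), 0 < h → 0 < σ → 1 < r →
        h ≤ σ^2 →
        ‖z‖ ≤ R → ‖z'‖ ≤ R →
        ‖ℓ‖ ≤ A * r⁻¹ * σ → ‖ℓ₁‖ ≤ A * r⁻¹ * σ →
        ‖C‖ ≤ A → ‖C₁‖ ≤ A →
        (h : ℂ) • ((z, z^2) : ℂ × ℂ) + ℓ • ((1, 2*z) : ℂ × ℂ)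
            + (C / (r:ℂ)^2) • ((-2 * (starRingEnd ℂ) z, 1) : ℂ × ℂ)
          = (h : ℂ) • ((z', z'^2) : ℂ × ℂ) + ℓ₁ • ((1, 2*z') : ℂ × ℂ)
            + (C₁ / (r:ℂ)^2) • ((-2 * (starRingEnd ℂ) z', 1) : ℂ × ℂ) →
        ‖ℓ - (ℓ₁ + (h : ℂ) * (z' - z))‖
            ≤ K * r⁻¹^2 * (1 + ‖z' - z‖) ∧
          ‖((h : ℂ) * (z' - z) / 2 + ℓ₁) * (z' - z)‖
            ≤ K * r⁻¹^2 * (1 + ‖z' - z‖) := by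
  refine ⟨A * (1 + 2 * R) ^ 2, by positivity, ?_⟩
  intro h σ r z z' ℓ ℓ₁ C C₁ _ _ _ _ hz hz' _ _ hC hC₁ heq
  obtain ⟨e₁, e₂⟩ := parabola_plank_sub_eq heq
  have hE := norm_mul_sub_mul_le (Complex.norm_div_ofReal_sq_le hC₁ r)
    (Complex.norm_neg_two_mul_conj_le hz') (Complex.norm_div_ofReal_sq_le hC r)
    (Complex.norm_neg_two_mul_conj_le hz)
  have hc : ‖C / (r : ℂ) ^ 2 - C₁ / (r : ℂ) ^ 2‖ ≤ 2 * (A * r⁻¹ ^ 2) :=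
    (norm_sub_le _ _).trans (by linarith [Complex.norm_div_ofReal_sq_le hC r,
      Complex.norm_div_ofReal_sq_le hC₁ r])
  have hΔ : 1 ≤ 1 + ‖z' - z‖ := le_add_of_nonneg_right (norm_nonneg _)
  have hK : 0 ≤ A * (1 + 2 * R) ^ 2 * r⁻¹ ^ 2 := by positivity
  refine ⟨?_, ?_⟩ <;> refine le_trans ?_ (le_mul_of_one_le_right hK hΔ)
  · calc _ = _ := congrArg norm e₁
      _ ≤ 2 * (A * r⁻¹ ^ 2 * (2 * R)) := hE
      _ ≤ A * (1 + 2 * R) ^ 2 * r⁻¹ ^ 2 := by nlinarith [sq_nonneg (1 - 2 * R)]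
  · have halve : ((h : ℂ) * (z' - z) / 2 + ℓ₁) * (z' - z)
        = ((h : ℂ) * (z' - z) + 2 * ℓ₁) * (z' - z) / 2 := by ring
    rw [halve, e₂, norm_div, Complex.norm_two]
    have h2z : ‖2 * z‖ ≤ 2 * R := by rw [norm_mul, Complex.norm_two]; linarith
    calc _ ≤ (2 * (A * r⁻¹ ^ 2) + 2 * R * (2 * (A * r⁻¹ ^ 2 * (2 * R)))) / 2 := by
          gcongr
          exact (norm_add_le _ _).trans (add_le_add hc ((norm_mul_le _ _).trans
            (mul_le_mul h2z hE (norm_nonneg _) (by positivity))))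
      _ = (1 + 4 * R ^ 2) * (A * r⁻¹ ^ 2) := by ring
      _ ≤ (1 + 2 * R) ^ 2 * (A * r⁻¹ ^ 2) := by gcongr; nlinarith
      _ = A * (1 + 2 * R) ^ 2 * r⁻¹ ^ 2 := by ring
end
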